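/- arXiv:2211.08212 — 2 statements merged into one kernel-verified Lean document; each statement's English description precedes it below -/
import Mathlib

section
/- Let H be a symmetric n×n matrix with H ⪯ U_H·I (U_H > 0), g ∈ ℝ^n with g ≠ 0, δ ≥ 0, and suppose [v; t] is a unit eigenvector of F = [[H, g], [gᵀ, -δ]] for its smallest eigenvalue -θ with θ > δ and t ≠ 0. If d = v/t satisfies ‖d‖ ≤ Δ for some Δ ≤ √2/2, then ‖g‖ ≤ 2(U_H + δ)Δ. -/
open Matrix

/-- The homogenized matrix `F = [[H, g], [gᵀ, -δ]]`. -/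
noncomputable def homog {n : ℕ} (H : Matrix (Fin n) (Fin n) ℝ) (g : Fin n → ℝ) (δ : ℝ) :
    Matrix (Fin (n + 1)) (Fin (n + 1)) ℝ :=
  Matrix.of fun i j =>
    if hi : (i : ℕ) < n then
      if hj : (j : ℕ) < n then H ⟨i, hi⟩ ⟨j, hj⟩ else g ⟨i, hi⟩
    else if hj : (j : ℕ) < n then g ⟨j, hj⟩ else -δ

/-! Writing `d = v / t`, the eigenvalue equation splits into `(H + θ I) d = -g` and
`gᵀ d = δ - θ`, and minimality of `-θ` makes `H + θ I` positive semidefinite. Cauchy–Schwarz for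
the form of `H + θ I` gives `‖g‖⁴ ≤ (θ - δ) · gᵀ (H + θ I) g ≤ (θ - δ) (U_H + θ) ‖g‖²`, while
the Euclidean one gives `θ - δ = -gᵀ d ≤ Δ ‖g‖`. Together `‖g‖ ≤ (U_H + δ) Δ + Δ² ‖g‖`, and
`Δ² ≤ 1 / 2` finishes. -/

open scoped MatrixOrder ComplexOrder

theorem Matrix.IsHermitian.posSemidef_sub_smul_one {m 𝕜 : Type*} [RCLike 𝕜] [Fintype m]
    [DecidableEq m] {F : Matrix m m 𝕜} (hF : F.IsHermitian) {c : ℝ}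
    (h : ∀ i, c ≤ hF.eigenvalues i) : (F - (c : 𝕜) • 1).PosSemidef := by
  rw [← nonneg_iff_posSemidef, StarOrderedRing.nonneg_iff_spectrum_nonneg (R := ℝ) _]
  have hc : (c : 𝕜) • (1 : Matrix m m 𝕜) = algebraMap ℝ _ c := by
    rw [Algebra.algebraMap_eq_smul_one, RCLike.real_smul_eq_coe_smul (K := 𝕜)]
  rw [hc, ← spectrum.sub_singleton_eq, hF.spectrum_real_eq_range_eigenvalues]
  rintro _ ⟨_, ⟨i, rfl⟩, _, rfl, rfl⟩
  simpa using h i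

theorem Matrix.IsSymm.dotProduct_mulVec_comm {m R : Type*} [Fintype m] [CommSemiring R]
    {M : Matrix m m R} (hM : M.IsSymm) (x y : m → R) : x ⬝ᵥ M *ᵥ y = y ⬝ᵥ M *ᵥ x := by
  rw [dotProduct_mulVec, ← mulVec_transpose, hM.eq, dotProduct_comm]

theorem Matrix.PosSemidef.dotProduct_mulVec_sq_le {m : Type*} [Fintype m] {M : Matrix m m ℝ}
    (hM : M.PosSemidef) (x y : m → ℝ) :
    (x ⬝ᵥ M *ᵥ y) ^ 2 ≤ (x ⬝ᵥ M *ᵥ x) * (y ⬝ᵥ M *ᵥ y) := by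
  have hsymm := (isHermitian_iff_isSymm.mp hM.isHermitian).dotProduct_mulVec_comm y x
  have hquad : ∀ s : ℝ,
      0 ≤ (y ⬝ᵥ M *ᵥ y) * (s * s) + 2 * (x ⬝ᵥ M *ᵥ y) * s + x ⬝ᵥ M *ᵥ x := by
    intro s
    have := hM.dotProduct_mulVec_nonneg (x + s • y)
    simp only [star_trivial, mulVec_add, mulVec_smul, dotProduct_add, add_dotProduct,
      dotProduct_smul, smul_dotProduct, smul_eq_mul, hsymm] at this
    linarith
  have := discrim_le_zero hquad
  rw [discrim] at this
  linarith

theorem abs_dotProduct_le_sqrt_mul_sqrt {m : Type*} [Fintype m] (x y : m → ℝ) :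
    |x ⬝ᵥ y| ≤ √(x ⬝ᵥ x) * √(y ⬝ᵥ y) := by
  classical
  rw [← Real.sqrt_mul (by simpa using dotProduct_star_self_nonneg x)]
  simpa using Real.abs_le_sqrt (PosSemidef.one.dotProduct_mulVec_sq_le x y)

theorem Matrix.PosSemidef.dotProduct_self_sq_le {m : Type*} [Fintype m] {M : Matrix m m ℝ}
    (hM : M.PosSemidef) {d g : m → ℝ} (hd : M *ᵥ d = -g) :
    (g ⬝ᵥ g) ^ 2 ≤ -(g ⬝ᵥ d) * (g ⬝ᵥ M *ᵥ g) := by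
  have h := hM.dotProduct_mulVec_sq_le d g
  rwa [(isHermitian_iff_isSymm.mp hM.isHermitian).dotProduct_mulVec_comm d g, hd,
    dotProduct_neg, dotProduct_neg, neg_sq, dotProduct_comm d] at h

theorem homog_submatrix_castSucc {n : ℕ} (H : Matrix (Fin n) (Fin n) ℝ) (g : Fin n → ℝ) (δ : ℝ) :
    (homog H g δ).submatrix Fin.castSucc Fin.castSucc = H := by
  ext i j
  simp [homog]

theorem homog_mulVec_snoc {n : ℕ} (H : Matrix (Fin n) (Fin n) ℝ) (g : Fin n → ℝ) (δ : ℝ)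
    (v : Fin n → ℝ) (t : ℝ) :
    homog H g δ *ᵥ Fin.snoc v t = Fin.snoc (H *ᵥ v + t • g) (g ⬝ᵥ v - δ * t) := by
  ext i
  refine Fin.lastCases ?_ (fun i => ?_) i
  · simp [homog, mulVec, dotProduct, Fin.sum_univ_castSucc, sub_eq_add_neg]
  · simp [homog, mulVec, dotProduct, Fin.sum_univ_castSucc, mul_comm]

theorem homog_eigen_equations {n : ℕ} {H : Matrix (Fin n) (Fin n) ℝ} {g : Fin n → ℝ} {δ θ : ℝ}
    {v : Fin n → ℝ} {t : ℝ} (ht : t ≠ 0)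
    (h : homog H g δ *ᵥ Fin.snoc v t = (-θ) • (Fin.snoc v t : Fin (n + 1) → ℝ)) :
    (H + θ • 1) *ᵥ (t⁻¹ • v) = -g ∧ g ⬝ᵥ (t⁻¹ • v) = δ - θ := by
  rw [homog_mulVec_snoc] at h
  have hH : H *ᵥ v + t • g = (-θ) • v := funext fun i => by simpa using congrFun h i.castSucc
  have hg : g ⬝ᵥ v - δ * t = -θ * t := by simpa using congrFun h (Fin.last n)
  constructor
  · calc (H + θ • 1) *ᵥ (t⁻¹ • v) = t⁻¹ • (H *ᵥ v + θ • v) := by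
          rw [add_mulVec, smul_mulVec, one_mulVec, mulVec_smul]; module
      _ = -g := by
          rw [show H *ᵥ v + θ • v = -(t • g) by
              rw [eq_neg_iff_add_eq_zero, add_right_comm, hH]; module, smul_neg,
            inv_smul_smul₀ ht]
  · rw [dotProduct_smul, smul_eq_mul, show g ⬝ᵥ v = (δ - θ) * t by linarith, mul_comm,
      mul_inv_cancel_right₀ ht]

theorem homog_posSemidef_add_smul_one {n : ℕ} {H : Matrix (Fin n) (Fin n) ℝ} {g : Fin n → ℝ}
    {δ θ : ℝ} (hF : (homog H g δ).IsHermitian) (h : ∀ i, -θ ≤ hF.eigenvalues i) :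
    (H + θ • 1).PosSemidef := by
  have hsub : (homog H g δ + θ • 1).submatrix Fin.castSucc Fin.castSucc = H + θ • 1 := by
    conv_rhs =>
      rw [← homog_submatrix_castSucc H g δ, ← submatrix_one _ (Fin.castSucc_injective n)]
    rfl
  have := (hF.posSemidef_sub_smul_one h).submatrix Fin.castSucc
  rwa [RCLike.ofReal_real_eq_id, id, neg_smul, sub_neg_eq_add, hsub] at this

theorem le_two_mul_mul_of_sq_le {G a c Δ : ℝ} (hG : 0 < G) (ha : 0 ≤ a) (haG : a ≤ G * Δ)
    (hΔ : Δ ^ 2 ≤ 1 / 2) (h : G ^ 2 ≤ (c + a) * a) : G ≤ 2 * c * Δ := by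
  have hca : 0 < c + a := by nlinarith
  have hG' : G ^ 2 ≤ (c + G * Δ) * (G * Δ) := h.trans (by nlinarith)
  have : G ≤ c * Δ + G * Δ ^ 2 := by nlinarith
  nlinarith

theorem small_step_gradient_bound_general {n : ℕ}
    (H : Matrix (Fin n) (Fin n) ℝ)
    (U_H : ℝ)
    (hUH : ∀ w : Fin n → ℝ, w ⬝ᵥ (H *ᵥ w) ≤ U_H * (w ⬝ᵥ w))
    (g : Fin n → ℝ) (hg : g ≠ 0) (δ θ Δ : ℝ) (hθ : δ < θ)
    (hF : (homog H g δ).IsHermitian)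
    (v : Fin n → ℝ) (t : ℝ) (ht : t ≠ 0)
    (heig : homog H g δ *ᵥ Fin.snoc v t = (-θ) • (Fin.snoc v t : Fin (n + 1) → ℝ))
    (hmin : -θ = ⨅ i, hF.eigenvalues i)
    (hd : Real.sqrt ((t⁻¹ • v) ⬝ᵥ (t⁻¹ • v)) ≤ Δ)
    (hΔ : Δ ≤ Real.sqrt 2 / 2) :
    Real.sqrt (g ⬝ᵥ g) ≤ 2 * (U_H + δ) * Δ := by
  obtain ⟨hMd, hgd⟩ := homog_eigen_equations ht heig
  have hM : (H + θ • 1).PosSemidef :=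
    homog_posSemidef_add_smul_one hF fun i => hmin ▸ ciInf_le (Finite.bddBelow_range _) i
  have hgg : 0 < g ⬝ᵥ g := by simpa using dotProduct_star_self_pos_iff.mpr hg
  have hθδ : 0 ≤ θ - δ := sub_nonneg.mpr hθ.le
  have hgMg : g ⬝ᵥ (H + θ • 1) *ᵥ g ≤ (U_H + θ) * (g ⬝ᵥ g) := by
    rw [add_mulVec, smul_mulVec, one_mulVec, dotProduct_add, dotProduct_smul, smul_eq_mul]
    linarith [hUH g]
  have hsq : √(g ⬝ᵥ g) ^ 2 ≤ (U_H + δ + (θ - δ)) * (θ - δ) := by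
    have h := hM.dotProduct_self_sq_le hMd
    rw [hgd, neg_sub] at h
    rw [Real.sq_sqrt hgg.le]
    refine le_of_mul_le_mul_right ?_ hgg
    nlinarith [mul_le_mul_of_nonneg_left hgMg hθδ]
  have hstep : θ - δ ≤ √(g ⬝ᵥ g) * Δ :=
    calc θ - δ = -(g ⬝ᵥ t⁻¹ • v) := by rw [hgd, neg_sub]
      _ ≤ |g ⬝ᵥ t⁻¹ • v| := neg_le_abs _
      _ ≤ √(g ⬝ᵥ g) * √(t⁻¹ • v ⬝ᵥ t⁻¹ • v) := abs_dotProduct_le_sqrt_mul_sqrt _ _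
      _ ≤ √(g ⬝ᵥ g) * Δ := by gcongr
  have hΔsq : Δ ^ 2 ≤ 1 / 2 :=
    calc Δ ^ 2 ≤ (√2 / 2) ^ 2 := by gcongr; exact (Real.sqrt_nonneg _).trans hd
      _ = 1 / 2 := by rw [div_pow, Real.sq_sqrt zero_le_two]; norm_num
  exact le_two_mul_mul_of_sq_le (Real.sqrt_pos.mpr hgg) hθδ hstep hΔsq hsq

/-- Small-step bound on the gradient norm: if the homogenized direction
`d = v / t` satisfies `‖d‖ ≤ Δ ≤ √2 / 2`, then `‖g‖ ≤ 2 (U_H + δ) Δ`. -/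
theorem small_step_gradient_bound {n : ℕ}
    (H : Matrix (Fin n) (Fin n) ℝ) (hH : H.IsHermitian)
    (U_H : ℝ) (hUHpos : 0 < U_H)
    (hUH : ∀ w : Fin n → ℝ, w ⬝ᵥ (H *ᵥ w) ≤ U_H * (w ⬝ᵥ w))
    (g : Fin n → ℝ) (hg : g ≠ 0) (δ θ Δ : ℝ) (hδ : 0 ≤ δ) (hθ : δ < θ)
    (hF : (homog H g δ).IsHermitian)
    (v : Fin n → ℝ) (t : ℝ) (ht : t ≠ 0)
    (hunit : Fin.snoc v t ⬝ᵥ Fin.snoc v t = 1)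
    (heig : homog H g δ *ᵥ Fin.snoc v t = (-θ) • (Fin.snoc v t : Fin (n + 1) → ℝ))
    (hmin : -θ = ⨅ i, hF.eigenvalues i)
    (hd : Real.sqrt ((t⁻¹ • v) ⬝ᵥ (t⁻¹ • v)) ≤ Δ)
    (hΔ : Δ ≤ Real.sqrt 2 / 2) :
    Real.sqrt (g ⬝ᵥ g) ≤ 2 * (U_H + δ) * Δ :=
  small_step_gradient_bound_general H U_H hUH g hg δ θ Δ hθ hF v t ht heig hmin hd hΔ
end

section
/- Let f have M-Lipschitz continuous Hessian, set 0 < ν < 1/2, and let [v; t] be a unit eigenvector of F = [[H_k, g_k], [g_kᵀ, -δ]] for its smallest eigenvalue -θ with θ > δ ≥ 0, where H_k = ∇²f(x_k), g_k = ∇f(x_k). If |t| < ν, let d = sign(-g_kᵀv)·v and η = Δ/‖d‖ with 0 < Δ < ‖d‖. Then f(x_k + ηd) - f(x_k) ≤ -(Δ²/2)δ + (M/6)Δ³. -/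
/-!
The cubic Taylor bound `f (x + s) ≤ f x + ⟪∇f x, s⟫ + ½ ⟪∇²f x s, s⟫ + (M / 6) ‖s‖³`, valid for
an `M`-Lipschitz Hessian, reduces the claim to two facts about the step `s = η d`, which has
`‖s‖ = Δ`. First, `⟪g, s⟫ ≤ 0` because `d` is `v` oriented against the gradient. Second, the
eigenvector equations give `⟪H v, v⟫ = -θ ‖v‖² - (δ - θ) t²`, and `|t| < ν < 1/2` forces
`t² < 1/4 < ‖v‖²`, so `⟪H v, v⟫ ≤ -δ ‖v‖²`; this curvature bound is invariant under rescaling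
of `v`, hence also holds for `s`.
-/

open Set

section Taylor

variable {E F : Type*} [NormedAddCommGroup E] [NormedSpace ℝ E]
  [NormedAddCommGroup F] [NormedSpace ℝ F]

theorem hasDerivAt_add_smul (x s : E) (τ : ℝ) : HasDerivAt (fun τ : ℝ => x + τ • s) s τ := by
  simpa using ((hasDerivAt_id τ).smul_const s).const_add x

theorem norm_image_add_sub_sub_fderiv_le {g : E → F} {g' : E → E →L[ℝ] F} {M : ℝ}
    (hg : ∀ y, HasFDerivAt g (g' y) y) (x : E) (hlip : ∀ y, ‖g' y - g' x‖ ≤ M * ‖y - x‖)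
    (s : E) : ‖g (x + s) - g x - g' x s‖ ≤ M / 2 * ‖s‖ ^ 2 := by
  have hφ : ∀ τ : ℝ, HasDerivAt (fun τ : ℝ => g (x + τ • s) - g x - τ • g' x s)
      (g' (x + τ • s) s - g' x s) τ := fun τ =>
    ((((hg _).comp_hasDerivAt τ (hasDerivAt_add_smul x s τ)).sub_const (g x)).sub
      ((hasDerivAt_id τ).smul_const (g' x s))).congr_deriv (by rw [one_smul])
  have hB : ∀ τ : ℝ, HasDerivAt (fun τ : ℝ => M / 2 * ‖s‖ ^ 2 * τ ^ 2) (M * ‖s‖ ^ 2 * τ) τ :=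
    fun τ => ((hasDerivAt_pow 2 τ).const_mul (M / 2 * ‖s‖ ^ 2)).congr_deriv (by ring)
  have hbound : ∀ τ ∈ Ico (0 : ℝ) 1, ‖g' (x + τ • s) s - g' x s‖ ≤ M * ‖s‖ ^ 2 * τ := by
    rintro τ ⟨hτ, -⟩
    calc ‖g' (x + τ • s) s - g' x s‖ ≤ ‖g' (x + τ • s) - g' x‖ * ‖s‖ :=
          (g' (x + τ • s) - g' x).le_opNorm s
      _ ≤ M * ‖τ • s‖ * ‖s‖ := by
          gcongr
          simpa using hlip (x + τ • s)
      _ = M * ‖s‖ ^ 2 * τ := by rw [norm_smul, Real.norm_of_nonneg hτ]; ring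
  simpa using image_norm_le_of_norm_deriv_right_le_deriv_boundary
    (fun τ _ => (hφ τ).continuousAt.continuousWithinAt) (fun τ _ => (hφ τ).hasDerivWithinAt)
    (by simp) hB hbound (right_mem_Icc.2 zero_le_one)

end Taylor

section InnerProduct

variable {E : Type*} [NormedAddCommGroup E] [InnerProductSpace ℝ E]

theorem abs_image_add_sub_taylor_two_le [CompleteSpace E] {f : E → ℝ} {gf : E → E}
    {Hf : E → E →L[ℝ] E} {M : ℝ} (hgrad : ∀ y, HasGradientAt f (gf y) y)
    (hhess : ∀ y, HasFDerivAt gf (Hf y) y) (x : E) (hlip : ∀ y, ‖Hf y - Hf x‖ ≤ M * ‖y - x‖)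
    (s : E) :
    |f (x + s) - f x - inner ℝ (gf x) s - 1 / 2 * inner ℝ (Hf x s) s| ≤ M / 6 * ‖s‖ ^ 3 := by
  have hφ : ∀ τ : ℝ, HasDerivAt
      (fun τ : ℝ => f (x + τ • s) - f x - τ * inner ℝ (gf x) s - τ ^ 2 / 2 * inner ℝ (Hf x s) s)
      (inner ℝ (gf (x + τ • s) - gf x - Hf x (τ • s)) s) τ := fun τ => by
    refine (((((hgrad _).hasFDerivAt.comp_hasDerivAt τ (hasDerivAt_add_smul x s τ)).sub_const
      (f x)).sub ((hasDerivAt_id τ).mul_const (inner ℝ (gf x) s))).sub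
      (((hasDerivAt_pow 2 τ).div_const 2).mul_const (inner ℝ (Hf x s) s))).congr_deriv ?_
    simp [inner_sub_left, real_inner_smul_left]
  have hB : ∀ τ : ℝ, HasDerivAt (fun τ : ℝ => M / 6 * ‖s‖ ^ 3 * τ ^ 3)
      (M / 2 * ‖s‖ ^ 3 * τ ^ 2) τ :=
    fun τ => ((hasDerivAt_pow 3 τ).const_mul (M / 6 * ‖s‖ ^ 3)).congr_deriv (by ring)
  have hbound : ∀ τ ∈ Ico (0 : ℝ) 1,
      ‖inner ℝ (gf (x + τ • s) - gf x - Hf x (τ • s)) s‖ ≤ M / 2 * ‖s‖ ^ 3 * τ ^ 2 := by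
    rintro τ ⟨hτ, -⟩
    calc ‖inner ℝ (gf (x + τ • s) - gf x - Hf x (τ • s)) s‖
        ≤ ‖gf (x + τ • s) - gf x - Hf x (τ • s)‖ * ‖s‖ := norm_inner_le_norm _ _
      _ ≤ M / 2 * ‖τ • s‖ ^ 2 * ‖s‖ := by
          gcongr
          exact norm_image_add_sub_sub_fderiv_le hhess x hlip _
      _ = M / 2 * ‖s‖ ^ 3 * τ ^ 2 := by rw [norm_smul, Real.norm_of_nonneg hτ]; ring
  simpa using image_norm_le_of_norm_deriv_right_le_deriv_boundary
    (fun τ _ => (hφ τ).continuousAt.continuousWithinAt) (fun τ _ => (hφ τ).hasDerivWithinAt)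
    (by simp) hB hbound (right_mem_Icc.2 zero_le_one)

theorem inner_apply_self_le_of_bordered_eigen {H : E →L[ℝ] E} {g v : E} {t δ θ : ℝ}
    (heig1 : H v + t • g = (-θ) • v) (heig2 : inner ℝ g v - δ * t = -θ * t) (hθ : δ ≤ θ)
    (ht : t ^ 2 ≤ ‖v‖ ^ 2) : inner ℝ (H v) v ≤ -δ * ‖v‖ ^ 2 := by
  have hHv : inner ℝ (H v) v = -θ * ‖v‖ ^ 2 - t * inner ℝ g v := by
    rw [eq_sub_of_add_eq heig1, inner_sub_left, real_inner_smul_left, real_inner_smul_left,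
      real_inner_self_eq_norm_sq]
  rw [hHv, show inner ℝ g v = (δ - θ) * t by linarith]
  nlinarith [mul_le_mul_of_nonneg_left ht (sub_nonneg.2 hθ)]

theorem inner_apply_smul_self_le {H : E →L[ℝ] E} {v : E} {c : ℝ}
    (hv : inner ℝ (H v) v ≤ c * ‖v‖ ^ 2) (a : ℝ) :
    inner ℝ (H (a • v)) (a • v) ≤ c * ‖a • v‖ ^ 2 := by
  rw [map_smul, real_inner_smul_left, real_inner_smul_right, norm_smul, Real.norm_eq_abs,
    mul_pow, sq_abs]
  nlinarith [sq_nonneg a]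

end InnerProduct

theorem large_step_truncated_decrease_general {n : ℕ}
    (f : EuclideanSpace ℝ (Fin n) → ℝ)
    (gf : EuclideanSpace ℝ (Fin n) → EuclideanSpace ℝ (Fin n))
    (Hf : EuclideanSpace ℝ (Fin n) → EuclideanSpace ℝ (Fin n) →L[ℝ] EuclideanSpace ℝ (Fin n))
    (M ν δ θ Δ : ℝ)
    (hgrad : ∀ x, HasGradientAt f (gf x) x)
    (hhess : ∀ x, HasFDerivAt gf (Hf x) x)
    (hlip : ∀ x y, ‖Hf x - Hf y‖ ≤ M * ‖x - y‖)
    (hν1 : ν < 1 / 2)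
    (xk : EuclideanSpace ℝ (Fin n))
    (hθ : δ < θ)
    (v : EuclideanSpace ℝ (Fin n)) (t : ℝ)
    (hunit : ‖v‖ ^ 2 + t ^ 2 = 1)
    (heig1 : Hf xk v + t • gf xk = (-θ) • v)
    (heig2 : (inner ℝ (gf xk) v : ℝ) - δ * t = -θ * t)
    (ht : |t| < ν)
    (d : EuclideanSpace ℝ (Fin n))
    (hdd : d = Real.sign (-(inner ℝ (gf xk) v : ℝ)) • v)
    (hΔ0 : 0 < Δ) (hΔd : Δ < ‖d‖) :
    f (xk + (Δ / ‖d‖) • d) - f xk ≤ -(Δ ^ 2 / 2) * δ + M / 6 * Δ ^ 3 := by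
  have hd : 0 < ‖d‖ := hΔ0.trans hΔd
  have hstep : ‖(Δ / ‖d‖) • d‖ = Δ := by
    rw [norm_smul, Real.norm_of_nonneg (div_pos hΔ0 hd).le, div_mul_cancel₀ _ hd.ne']
  have hsv : (Δ / ‖d‖) • d = (Δ / ‖d‖ * Real.sign (-inner ℝ (gf xk) v)) • v := by
    rw [hdd, smul_smul]
  have hdescent : inner ℝ (gf xk) ((Δ / ‖d‖) • d) ≤ 0 := by
    rw [hsv, real_inner_smul_right, mul_assoc, Real.sign_neg, neg_mul]
    exact mul_nonpos_of_nonneg_of_nonpos (div_pos hΔ0 hd).le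
      (neg_nonpos.2 (Real.sign_mul_nonneg _))
  have ht2 : t ^ 2 ≤ ‖v‖ ^ 2 := by
    have : t ^ 2 < 1 / 4 := by nlinarith [sq_abs t, abs_nonneg t]
    linarith
  have hcurv : inner ℝ (Hf xk ((Δ / ‖d‖) • d)) ((Δ / ‖d‖) • d) ≤ -δ * Δ ^ 2 := by
    have := inner_apply_smul_self_le (inner_apply_self_le_of_bordered_eigen heig1 heig2 hθ.le ht2)
      (Δ / ‖d‖ * Real.sign (-inner ℝ (gf xk) v))
    rwa [← hsv, hstep] at this
  have htaylor := le_of_abs_le (abs_image_add_sub_taylor_two_le hgrad hhess xk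
    (fun y => hlip y xk) ((Δ / ‖d‖) • d))
  rw [hstep] at htaylor
  linarith

/-- Sufficient decrease in the large-value case `|t| < ν` with the truncated
direction `d = sign(-gᵀv) v` and stepsize `η = Δ / ‖d‖`. -/
theorem large_step_truncated_decrease {n : ℕ}
    (f : EuclideanSpace ℝ (Fin n) → ℝ)
    (gf : EuclideanSpace ℝ (Fin n) → EuclideanSpace ℝ (Fin n))
    (Hf : EuclideanSpace ℝ (Fin n) → EuclideanSpace ℝ (Fin n) →L[ℝ] EuclideanSpace ℝ (Fin n))
    (M ν δ θ Δ : ℝ)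
    (hgrad : ∀ x, HasGradientAt f (gf x) x)
    (hhess : ∀ x, HasFDerivAt gf (Hf x) x)
    (hlip : ∀ x y, ‖Hf x - Hf y‖ ≤ M * ‖x - y‖)
    (hν0 : 0 < ν) (hν1 : ν < 1 / 2)
    (xk : EuclideanSpace ℝ (Fin n))
    (hδ : 0 ≤ δ) (hθ : δ < θ)
    (v : EuclideanSpace ℝ (Fin n)) (t : ℝ)
    (hunit : ‖v‖ ^ 2 + t ^ 2 = 1)
    (heig1 : Hf xk v + t • gf xk = (-θ) • v)
    (heig2 : (inner ℝ (gf xk) v : ℝ) - δ * t = -θ * t)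
    (hmin : ∀ (w : EuclideanSpace ℝ (Fin n)) (s : ℝ),
      (-θ) * (‖w‖ ^ 2 + s ^ 2) ≤
        (inner ℝ (Hf xk w) w : ℝ) + 2 * s * (inner ℝ (gf xk) w : ℝ) - δ * s ^ 2)
    (ht : |t| < ν)
    (d : EuclideanSpace ℝ (Fin n))
    (hdd : d = Real.sign (-(inner ℝ (gf xk) v : ℝ)) • v)
    (hΔ0 : 0 < Δ) (hΔd : Δ < ‖d‖) :
    f (xk + (Δ / ‖d‖) • d) - f xk ≤ -(Δ ^ 2 / 2) * δ + M / 6 * Δ ^ 3 :=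
  large_step_truncated_decrease_general f gf Hf M ν δ θ Δ hgrad hhess hlip hν1 xk hθ v t hunit heig1
    heig2 ht d hdd hΔ0 hΔd
end
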